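/- Recovery of the partition into parallel-separator-sets: Let S and S' be open connected subsets of ℝ^d and h : S → S' a smooth diffeomorphism. Let A be a discrete coordination on S whose axis-separator set 𝒢(A) has a backbone, let B be a discrete coordination on S', and suppose h(grid_S(A)) = grid_{S'}(B). For each axis i, let 𝒢^{(i)}(A) = {Γ_S(i,A_{i,k}) : 1 ≤ k ≤ n_i} and 𝒢^{(j)}(B) = {Γ_{S'}(j,B_{j,k}) : 1 ≤ k ≤ m_j}. Then there exists a permutation σ of {1,…,d} such that for every i, H ∈ 𝒢^{(i)}(A) if and only if h(H) ∈ 𝒢^{(σ(i))}(B); in particular H ↦ h(H) restricts to a bijection from 𝒢^{(i)}(A) onto 𝒢^{(σ(i))}(B). -/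

import Mathlib

open Set MeasureTheory Topology

noncomputable section

abbrev Euc (d : ℕ) := EuclideanSpace ℝ (Fin d)

/-- Axis separator: points of `S` whose `i`-th coordinate equals `τ`. -/
def Gamma {d : ℕ} (S : Set (Euc d)) (i : Fin d) (τ : ℝ) : Set (Euc d) :=
  {z | z ∈ S ∧ z i = τ}

/-- Positive half: points of `S` whose `i`-th coordinate is greater than `τ`. -/
def GammaPos {d : ℕ} (S : Set (Euc d)) (i : Fin d) (τ : ℝ) : Set (Euc d) :=
  {z | z ∈ S ∧ τ < z i}

/-- Negative half: points of `S` whose `i`-th coordinate is less than `τ`. -/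
def GammaNeg {d : ℕ} (S : Set (Euc d)) (i : Fin d) (τ : ℝ) : Set (Euc d) :=
  {z | z ∈ S ∧ z i < τ}

/-- `Γ_S(i,τ)` is an axis-separator of `S`: it is nonempty and connected, and both of
its halves are nonempty and connected. (`IsConnected` includes nonemptiness.) -/
def IsAxisSeparator {d : ℕ} (S : Set (Euc d)) (i : Fin d) (τ : ℝ) : Prop :=
  IsConnected (Gamma S i τ) ∧ IsConnected (GammaPos S i τ) ∧ IsConnected (GammaNeg S i τ)

/-- A smooth diffeomorphism from `S` onto `S'` with explicit inverse `hinv`. -/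
structure IsSmoothDiffeoOn {d : ℕ} (h hinv : Euc d → Euc d) (S S' : Set (Euc d)) : Prop where
  mapsTo : Set.MapsTo h S S'
  mapsTo_inv : Set.MapsTo hinv S' S
  left_inv : ∀ z ∈ S, hinv (h z) = z
  right_inv : ∀ z' ∈ S', h (hinv z') = z'
  smooth : ContDiffOn ℝ (⊤ : ℕ∞) h S
  smooth_inv : ContDiffOn ℝ (⊤ : ℕ∞) hinv S'

/-- A discrete coordination on `S`: for each axis `i`, a strictly increasing nonempty tuple
of thresholds, each giving an axis-separator of `S`. -/
structure DiscreteCoordination {d : ℕ} (S : Set (Euc d)) where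
  n : Fin d → ℕ
  n_pos : ∀ i, 0 < n i
  A : (i : Fin d) → Fin (n i) → ℝ
  mono : ∀ i, StrictMono (A i)
  sep : ∀ i k, IsAxisSeparator S i (A i k)

/-- The grid of a discrete coordination: the union of all its axis-separators. -/
def DiscreteCoordination.grid {d : ℕ} {S : Set (Euc d)} (C : DiscreteCoordination S) :
    Set (Euc d) :=
  ⋃ (i : Fin d), ⋃ (k : Fin (C.n i)), Gamma S i (C.A i k)

/-- The parallel-separator-set along axis `i`. -/
def DiscreteCoordination.axisSet {d : ℕ} {S : Set (Euc d)} (C : DiscreteCoordination S)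
    (i : Fin d) : Set (Set (Euc d)) :=
  {H | ∃ k : Fin (C.n i), H = Gamma S i (C.A i k)}

/-- The axis-separator set of a discrete coordination. -/
def DiscreteCoordination.sepSet {d : ℕ} {S : Set (Euc d)} (C : DiscreteCoordination S) :
    Set (Set (Euc d)) :=
  {H | ∃ (i : Fin d) (k : Fin (C.n i)), H = Gamma S i (C.A i k)}

/-- A backbone: a choice of one separator per axis such that they all meet in a single
point and each of them meets every separator of the grid lying on a different axis. -/
def DiscreteCoordination.HasBackbone {d : ℕ} {S : Set (Euc d)}
    (C : DiscreteCoordination S) : Prop :=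
  ∃ kstar : (i : Fin d) → Fin (C.n i),
    (∃ z : Euc d, (⋂ (i : Fin d), Gamma S i (C.A i (kstar i))) = {z}) ∧
    ∀ (i j : Fin d), j ≠ i → ∀ k : Fin (C.n j),
      (Gamma S i (C.A i (kstar i)) ∩ Gamma S j (C.A j k)).Nonempty

/-- Quantization: `Q(x;T) = Σ_k 1[x ≥ T_k]`. -/
def Q {K : ℕ} (x : ℝ) (T : Fin K → ℝ) : ℕ :=
  (Finset.univ.filter fun k : Fin K => T k ≤ x).card

/-- Quantization with order reversal: `Q⁻(x;T) = Σ_k 1[x ≤ T_k]`. -/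
def Qneg {K : ℕ} (x : ℝ) (T : Fin K → ℝ) : ℕ :=
  (Finset.univ.filter fun k : Fin K => x ≤ T k).card

/-- Signed quantization: `Q^{+1} = Q` and `Q^{-1} = Q⁻`. -/
def Qsgn {K : ℕ} (s : ℤ) (x : ℝ) (T : Fin K → ℝ) : ℕ :=
  if s = 1 then Q x T else Qneg x T

/-- `μ` (absolutely continuous w.r.t. Lebesgue) has a non-removable discontinuity at `z`
if every measurable density of `μ` w.r.t. Lebesgue measure is discontinuous at `z`. -/
def HasNonRemovableDiscont {d : ℕ} (μ : Measure (Euc d)) (z : Euc d) : Prop :=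
  ∀ q : Euc d → ENNReal, Measurable q → μ = volume.withDensity q → ¬ ContinuousAt q z

/-- `T` has exactly two connected components, namely `Cp` and `Cm`. -/
def TwoComponents {d : ℕ} (T Cp Cm : Set (Euc d)) : Prop :=
  Cp ≠ Cm ∧
  (∃ x ∈ T, connectedComponentIn T x = Cp) ∧
  (∃ x ∈ T, connectedComponentIn T x = Cm) ∧
  ∀ x ∈ T, connectedComponentIn T x = Cp ∨ connectedComponentIn T x = Cm

/-- The intersection set of a finite family of separators: points lying on at least two
distinct members. -/
def interSet {d M : ℕ} (H : Fin M → Set (Euc d)) : Set (Euc d) :=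
  ⋃ (m : Fin M), ⋃ (m' : Fin M), ⋃ (_ : m ≠ m'), H m ∩ H m'

/-!
Near a point `x`, the grid consists of the `m` separators through `x`, which cut a small ball into
`2 ^ m` orthants. A homeomorphism `e` carrying grid onto grid induces an injective map from the
orthants at `x` to those at `e x`, so it preserves `m`; and crossing a single separator changes
the image orthant in exactly one axis, that of the image separator. Around a point of a separator
`H` of axis `i`, the orthant map is thus an injective map of cubes sending edges to edges; in a
square opposite edges then change the same axis, hence all edges in direction `i` do, and near
that point `e` maps `H` into one separator. As `H` is connected, `e '' H` lies in a single
separator, with equality by symmetry. The backbone separators meet pairwise, so their image axes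
are distinct, and every separator meets the backbone separators of all other axes, which forces
its image axis to be that of the backbone separator of its own axis.
-/

open Metric
open scoped symmDiff

lemma IsPreconnected.lt_iff_lt_of_notMem {s : Set ℝ} (hs : IsPreconnected s) {c a b : ℝ}
    (hc : c ∉ s) (ha : a ∈ s) (hb : b ∈ s) : c < a ↔ c < b := by
  have key : ∀ {a b}, a ∈ s → b ∈ s → c < a → c < b := fun ha hb hca => by
    by_contra! hbc
    exact hc (hs.Icc_subset hb ha ⟨hbc, hca.le⟩)
  exact ⟨key ha hb, key hb ha⟩

namespace Finset

variable {α β : Type*} [DecidableEq α] [DecidableEq β]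

lemma symmDiff_eq_singleton_iff {s t : Finset α} {a : α} :
    s ∆ t = {a} ↔ ∀ g, (g ∈ s ↔ g ∈ t) ↔ g ≠ a := by
  simp only [Finset.ext_iff, mem_symmDiff, mem_singleton]
  exact forall_congr' fun g => by tauto

lemma symmDiff_eq_singleton_of_erase_eq {s t : Finset α} {a : α} (h : s.erase a = t.erase a)
    (hne : s ≠ t) : s ∆ t = {a} := by
  rw [symmDiff_eq_singleton_iff]
  intro g
  refine ⟨fun hg hga => hne ?_, fun hga => by simpa [hga] using congrArg (g ∈ ·) h⟩
  ext g'
  by_cases hg' : g' = a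
  · exact hg' ▸ hga ▸ hg
  · simpa [hg'] using congrArg (g' ∈ ·) h

lemma eq_of_symmDiff_square {s₀ s₁ s₂ s₃ : Finset α} {a b c e : α}
    (h₀₁ : s₀ ∆ s₁ = {a}) (h₁₂ : s₁ ∆ s₂ = {b}) (h₂₃ : s₂ ∆ s₃ = {c}) (h₃₀ : s₃ ∆ s₀ = {e})
    (h₀₂ : s₀ ≠ s₂) (h₁₃ : s₁ ≠ s₃) : a = c := by
  rw [symmDiff_eq_singleton_iff] at h₀₁ h₁₂ h₂₃ h₃₀
  have hab : a ≠ b := by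
    rintro rfl
    exact h₀₂ (Finset.ext fun g => by have := h₀₁ g; have := h₁₂ g; tauto)
  have hbc : b ≠ c := by
    rintro rfl
    exact h₁₃ (Finset.ext fun g => by have := h₁₂ g; have := h₂₃ g; tauto)
  have hbe : b = e := by
    by_contra hbe
    have := h₀₁ b; have := h₁₂ b; have := h₂₃ b; have := h₃₀ b
    simp only [ne_eq, hab.symm, hbc, hbe, not_false_eq_true, not_true_eq_false, iff_true,
      iff_false] at *
    tauto
  by_contra hac
  have := h₀₁ a; have := h₁₂ a; have := h₂₃ a; have := h₃₀ a
  subst hbe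
  simp only [ne_eq, hab, hac, not_false_eq_true, not_true_eq_false, iff_true, iff_false] at *
  tauto

lemma exists_symmDiff_insert_eq_singleton {P : Finset α → Finset β} {I : Finset α}
    (hP : InjOn P I.powerset)
    (hedge : ∀ k ∈ I, ∀ σ ⊆ I, k ∉ σ → ∃ f, P (insert k σ) ∆ P σ = {f}) {i : α} (hi : i ∈ I) :
    ∃ f, ∀ σ ⊆ I, i ∉ σ → P (insert i σ) ∆ P σ = {f} := by
  obtain ⟨f, hf⟩ := hedge i hi ∅ (empty_subset I) (notMem_empty i)
  refine ⟨f, fun σ => ?_⟩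
  induction σ using Finset.induction_on with
  | empty => exact fun _ _ => hf
  | @insert j σ hjσ ih =>
    intro hσI hiσ
    have hjI : j ∈ I := hσI (mem_insert_self j σ)
    have hσI' : σ ⊆ I := (subset_insert j σ).trans hσI
    have hij : i ≠ j := fun h => hiσ (h ▸ mem_insert_self j σ)
    have hiσ' : i ∉ σ := fun h => hiσ (mem_insert_of_mem h)
    obtain ⟨f', hf'⟩ := hedge i hi _ hσI hiσ
    obtain ⟨b, hb⟩ := hedge j hjI (insert i σ) (insert_subset hi hσI')
      (by simp [hij.symm, hjσ])
    obtain ⟨c, hc⟩ := hedge j hjI σ hσI' hjσ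
    have hinj : ∀ {τ τ'}, τ ⊆ I → τ' ⊆ I → τ ≠ τ' → P τ ≠ P τ' := fun hτ hτ' hne h =>
      hne (hP (mem_powerset.2 hτ) (mem_powerset.2 hτ') h)
    have hsq := eq_of_symmDiff_square (s₀ := P σ) (s₂ := P (insert j (insert i σ)))
      (by rw [symmDiff_comm]; exact ih hσI' hiσ') (by rw [symmDiff_comm]; exact hb)
      (by rw [insert_comm]; exact hf') hc
      (hinj hσI' (insert_subset hjI (insert_subset hi hσI'))
        fun h => hiσ' (h ▸ mem_insert_of_mem (mem_insert_self i σ)))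
      (hinj (insert_subset hi hσI') hσI fun h => hiσ (h ▸ mem_insert_self i σ))
    rw [hf', hsq]

end Finset

section Coordinates

variable {d : ℕ}

lemma exists_mem_ball_sides (x : Euc d) (K σ : Finset (Fin d)) {r : ℝ} (hr : 0 < r) :
    ∃ z ∈ ball x r, ∀ k, (z k = x k ↔ k ∈ K) ∧ (x k < z k ↔ k ∉ K ∧ k ∈ σ) := by
  let u : Euc d := WithLp.toLp 2 fun k => if k ∈ K then 0 else if k ∈ σ then 1 else -1
  have hlim : Filter.Tendsto (fun t : ℝ => x + t • u) (𝓝[>] 0) (𝓝 x) := by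
    have : Continuous fun t : ℝ => x + t • u := by fun_prop
    simpa using (this.tendsto 0).mono_left nhdsWithin_le_nhds
  obtain ⟨t, ht, htpos⟩ :=
    ((hlim.eventually (ball_mem_nhds x hr)).and self_mem_nhdsWithin).exists
  refine ⟨x + t • u, ht, fun k => ?_⟩
  have htpos : (0 : ℝ) < t := htpos
  by_cases hK : k ∈ K <;> by_cases hσ : k ∈ σ <;> simp [u, hK, hσ, htpos, htpos.ne', htpos.le]

lemma Gamma_subset (S : Set (Euc d)) (i : Fin d) (τ : ℝ) : Gamma S i τ ⊆ S := fun _ hz => hz.1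

lemma eq_of_Gamma_subset_Gamma {S : Set (Euc d)} (hS : IsOpen S) {i j : Fin d} {τ θ : ℝ}
    (hne : (Gamma S i τ).Nonempty) (hsub : Gamma S i τ ⊆ Gamma S j θ) : i = j ∧ τ = θ := by
  obtain ⟨z, hz⟩ := hne
  have hzθ : z j = θ := (hsub hz).2
  by_cases hij : i = j
  · subst hij
    exact ⟨rfl, hz.2.symm.trans hzθ⟩
  obtain ⟨r, hr, hball⟩ := Metric.isOpen_iff.1 hS z hz.1
  obtain ⟨z', hz', hside⟩ := exists_mem_ball_sides z {i} ∅ hr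
  have hz'i : z' i = τ := ((hside i).1.2 (Finset.mem_singleton_self i)).trans hz.2
  have hz'j : z' j ≠ z j := fun h => hij (Finset.mem_singleton.1 ((hside j).1.1 h)).symm
  exact absurd ((hsub ⟨hball hz', hz'i⟩).2.trans hzθ.symm) hz'j

/-- The orthant around `x` containing `z`, encoded by the axes of `I` along which `z` lies
above `x`. -/
def upperAxes (x : Euc d) (I : Finset (Fin d)) (z : Euc d) : Finset (Fin d) :=
  I.filter fun i => x i < z i

lemma upperAxes_of_sides {x w : Euc d} {I K σ : Finset (Fin d)}
    (hw : ∀ k, (w k = x k ↔ k ∈ K) ∧ (x k < w k ↔ k ∉ K ∧ k ∈ σ)) (hσ : σ ⊆ I)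
    (hK : Disjoint K σ) : upperAxes x I w = σ := by
  ext k
  simp only [upperAxes, Finset.mem_filter, (hw k).2]
  exact ⟨fun h => h.2.2, fun h => ⟨hσ h, Finset.disjoint_right.1 hK h, h⟩⟩

lemma upperAxes_add_smul_single {x w : Euc d} {I : Finset (Fin d)} {i : Fin d} (hi : i ∈ I)
    (hwi : w i = x i) (s : ℝ) :
    upperAxes x I (w + s • EuclideanSpace.single i 1) =
      if 0 < s then insert i (upperAxes x I w) else upperAxes x I w := by
  ext k
  by_cases hki : k = i
  · subst hki
    split_ifs with hpos <;> simp [upperAxes, hi, hwi, hpos]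
  · split_ifs <;> simp [upperAxes, hki]

lemma IsPreconnected.upperAxes_eq {W : Set (Euc d)} (hW : IsPreconnected W) {x : Euc d}
    {I : Finset (Fin d)} (hoff : ∀ z ∈ W, ∀ i ∈ I, z i ≠ x i) {z z' : Euc d} (hz : z ∈ W)
    (hz' : z' ∈ W) : upperAxes x I z = upperAxes x I z' := by
  ext i
  simp only [upperAxes, Finset.mem_filter, and_congr_right_iff]
  intro hi
  refine (hW.image _ (by fun_prop : Continuous fun p : Euc d => p i).continuousOn)
    |>.lt_iff_lt_of_notMem ?_ (mem_image_of_mem _ hz) (mem_image_of_mem _ hz')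
  rintro ⟨p, hp, hpi⟩
  exact hoff p hp i hi hpi

end Coordinates

namespace DiscreteCoordination

variable {d : ℕ} {S : Set (Euc d)}

open Classical in
def axesAt (C : DiscreteCoordination S) (x : Euc d) : Finset (Fin d) :=
  Finset.univ.filter fun i => ∃ k, x i = C.A i k

/-- A ball around `x` inside `S` meeting only the separators of `C` through `x`. -/
def IsGridBall (C : DiscreteCoordination S) (x : Euc d) (ε : ℝ) : Prop :=
  0 < ε ∧ ball x ε ⊆ S ∧ ∀ z ∈ ball x ε, ∀ i ∈ C.axesAt z, z i = x i

variable {C : DiscreteCoordination S} {v x z : Euc d} {i j : Fin d} {ε δ : ℝ}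
  {H : Set (Euc d)}

lemma mem_axesAt : i ∈ C.axesAt x ↔ ∃ k, x i = C.A i k := by
  simp [axesAt]

lemma grid_subset : C.grid ⊆ S := by
  simp only [grid, iUnion_subset_iff]
  exact fun i k => Gamma_subset S i _

lemma mem_grid_iff : x ∈ C.grid ↔ x ∈ S ∧ (C.axesAt x).Nonempty := by
  simp [grid, Gamma, mem_axesAt, Finset.Nonempty]

lemma exists_isGridBall (hS : IsOpen S) (C : DiscreteCoordination S) (hx : x ∈ S) :
    ∃ ε, C.IsGridBall x ε := by
  have hev : ∀ᶠ z in 𝓝 x, z ∈ S ∧ ∀ i k, x i ≠ C.A i k → z i ≠ C.A i k := by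
    refine (hS.eventually_mem hx).and
      (Filter.eventually_all.2 fun i => Filter.eventually_all.2 fun k => ?_)
    by_cases hxk : x i = C.A i k
    · exact Filter.Eventually.of_forall fun _ h => absurd hxk h
    · have hcont : Continuous fun p : Euc d => p i := by fun_prop
      filter_upwards [hcont.continuousAt.eventually_ne hxk] with z hz using fun _ => hz
  obtain ⟨ε, hε, hball⟩ := Metric.eventually_nhds_iff_ball.1 hev
  refine ⟨ε, hε, fun z hz => (hball z hz).1, fun z hz i hi => ?_⟩
  obtain ⟨k, hk⟩ := mem_axesAt.1 hi
  by_contra hne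
  exact (hball z hz).2 i k (fun h => hne (hk.trans h.symm)) hk

lemma IsGridBall.mono (hC : C.IsGridBall x ε) (hδ : 0 < δ) (hle : δ ≤ ε) : C.IsGridBall x δ :=
  ⟨hδ, (ball_subset_ball hle).trans hC.2.1, fun z hz => hC.2.2 z (ball_subset_ball hle hz)⟩

lemma IsGridBall.mem_axesAt_iff (hC : C.IsGridBall x ε) (hz : z ∈ ball x ε) :
    i ∈ C.axesAt z ↔ i ∈ C.axesAt x ∧ z i = x i := by
  refine ⟨fun hi => ?_, fun ⟨hi, hzi⟩ => by rwa [mem_axesAt, hzi, ← mem_axesAt]⟩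
  have hzi := hC.2.2 z hz i hi
  exact ⟨by rwa [mem_axesAt, ← hzi, ← mem_axesAt], hzi⟩

lemma IsGridBall.notMem_grid_iff (hC : C.IsGridBall x ε) (hz : z ∈ ball x ε) :
    z ∉ C.grid ↔ ∀ i ∈ C.axesAt x, z i ≠ x i := by
  simp [mem_grid_iff, hC.2.1 hz, Finset.Nonempty, hC.mem_axesAt_iff hz]

lemma IsGridBall.exists_notMem_grid_upperAxes_eq (hC : C.IsGridBall x ε) {σ : Finset (Fin d)}
    (hσ : σ ⊆ C.axesAt x) (hδ : 0 < δ) (hδε : δ ≤ ε) :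
    ∃ w ∈ ball x δ, w ∉ C.grid ∧ upperAxes x (C.axesAt x) w = σ := by
  obtain ⟨w, hw, hside⟩ := exists_mem_ball_sides x ∅ σ hδ
  refine ⟨w, hw, (hC.notMem_grid_iff (ball_subset_ball hδε hw)).2 fun k _ h => ?_,
    upperAxes_of_sides hside hσ (Finset.disjoint_empty_left σ)⟩
  simpa using (hside k).1.1 h

lemma IsGridBall.exists_axesAt_eq_singleton (hC : C.IsGridBall x ε) (hi : i ∈ C.axesAt x)
    {σ : Finset (Fin d)} (hσ : σ ⊆ C.axesAt x) (hiσ : i ∉ σ) (hδ : 0 < δ) (hδε : δ ≤ ε) :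
    ∃ w ∈ ball x δ, C.axesAt w = {i} ∧ upperAxes x (C.axesAt x) w = σ := by
  obtain ⟨w, hw, hside⟩ := exists_mem_ball_sides x {i} σ hδ
  refine ⟨w, hw, ?_, upperAxes_of_sides hside hσ (Finset.disjoint_singleton_left.2 hiσ)⟩
  ext k
  rw [hC.mem_axesAt_iff (ball_subset_ball hδε hw), (hside k).1, Finset.mem_singleton]
  exact ⟨fun h => h.2, fun h => ⟨h ▸ hi, h⟩⟩

lemma exists_axesAt_eq_singleton (hS : IsOpen S) (hv : v ∈ S) (hi : i ∈ C.axesAt v)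
    (hδ : 0 < δ) : ∃ w ∈ ball v δ, C.axesAt w = {i} := by
  obtain ⟨ε, hC⟩ := C.exists_isGridBall hS hv
  obtain ⟨w, hw, hwi, -⟩ := hC.exists_axesAt_eq_singleton hi (Finset.empty_subset _)
    (Finset.notMem_empty i) (lt_min hδ hC.1) (min_le_right _ _)
  exact ⟨w, ball_subset_ball (min_le_left _ _) hw, hwi⟩

lemma IsGridBall.exists_crossing (hC : C.IsGridBall v ε) {w : Euc d} (hw : w ∈ ball v ε)
    (hwi : C.axesAt w = {i}) :
    ∃ L ⊆ ball v ε, IsPreconnected L ∧ (∀ p ∈ L, p ∈ C.grid → p = w) ∧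
      ∃ z₁ ∈ L, ∃ z₀ ∈ L, z₁ ∉ C.grid ∧ z₀ ∉ C.grid ∧
        upperAxes v (C.axesAt v) z₁ = insert i (upperAxes v (C.axesAt v) w) ∧
        upperAxes v (C.axesAt v) z₀ = upperAxes v (C.axesAt v) w := by
  have hwk : ∀ k, k ∈ C.axesAt v ∧ w k = v k ↔ k = i := fun k => by
    rw [← hC.mem_axesAt_iff hw, hwi, Finset.mem_singleton]
  obtain ⟨hiI, hwiv⟩ := (hwk i).2 rfl
  obtain ⟨r, hr, hrball⟩ := Metric.isOpen_iff.1 isOpen_ball w hw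
  let γ : ℝ → Euc d := fun s => w + s • EuclideanSpace.single i 1
  have hγk : ∀ s k, γ s k = if k = i then v k + s else w k := fun s k => by
    by_cases hk : k = i <;> simp [γ, hk, hwiv]
  have hγball : ∀ s ∈ Icc (-(r / 2)) (r / 2), γ s ∈ ball v ε := fun s hs => hrball <| by
    simpa [γ, dist_eq_norm, norm_smul] using (abs_le.2 hs).trans_lt (half_lt_self hr)
  have hγgrid : ∀ s ∈ Icc (-(r / 2)) (r / 2), γ s ∈ C.grid → s = 0 := fun s hs hg => by
    by_contra hs0
    refine absurd hg ((hC.notMem_grid_iff (hγball s hs)).2 fun k hk => ?_)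
    rw [hγk]
    split_ifs with hki
    · simpa using hs0
    · exact fun h => hki ((hwk k).1 ⟨hk, h⟩)
  have hr2 : 0 < r / 2 := half_pos hr
  have hmem₁ : r / 2 ∈ Icc (-(r / 2)) (r / 2) := ⟨by linarith, le_rfl⟩
  have hmem₀ : -(r / 2) ∈ Icc (-(r / 2)) (r / 2) := ⟨le_rfl, by linarith⟩
  refine ⟨γ '' Icc (-(r / 2)) (r / 2), image_subset_iff.2 hγball,
    isPreconnected_Icc.image γ (by fun_prop : Continuous γ).continuousOn, ?_,
    γ (r / 2), mem_image_of_mem γ hmem₁, γ (-(r / 2)), mem_image_of_mem γ hmem₀,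
    fun h => hr2.ne' (hγgrid _ hmem₁ h), fun h => hr2.ne' (neg_eq_zero.1 (hγgrid _ hmem₀ h)),
    (upperAxes_add_smul_single hiI hwiv _).trans (if_pos hr2),
    (upperAxes_add_smul_single hiI hwiv _).trans (if_neg (by linarith))⟩
  rintro _ ⟨s, hs, rfl⟩ hg
  simp [γ, hγgrid s hs hg]

lemma eq_of_mem_axisSet (hS : IsOpen S) (hi : H ∈ C.axisSet i) (hj : H ∈ C.axisSet j) :
    i = j := by
  obtain ⟨k, rfl⟩ := hi
  obtain ⟨l, hl⟩ := hj
  exact (eq_of_Gamma_subset_Gamma hS (C.sep i k).1.nonempty hl.le).1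

end DiscreteCoordination

def IsSmoothDiffeoOn.toOpenPartialHomeomorph {d : ℕ} {h hinv : Euc d → Euc d}
    {S S' : Set (Euc d)} (hd : IsSmoothDiffeoOn h hinv S S') (hS : IsOpen S) (hS' : IsOpen S') :
    OpenPartialHomeomorph (Euc d) (Euc d) where
  toFun := h
  invFun := hinv
  source := S
  target := S'
  map_source' := hd.mapsTo
  map_target' := hd.mapsTo_inv
  left_inv' := hd.left_inv
  right_inv' := hd.right_inv
  open_source := hS
  open_target := hS'
  continuousOn_toFun := hd.smooth.continuousOn
  continuousOn_invFun := hd.smooth_inv.continuousOn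

namespace OpenPartialHomeomorph

open DiscreteCoordination

variable {d : ℕ} {S S' : Set (Euc d)}

structure MapsGrid (e : OpenPartialHomeomorph (Euc d) (Euc d)) (CA : DiscreteCoordination S)
    (CB : DiscreteCoordination S') : Prop where
  source_eq : e.source = S
  target_eq : e.target = S'
  image_grid : e '' CA.grid = CB.grid

variable {e : OpenPartialHomeomorph (Euc d) (Euc d)} {CA : DiscreteCoordination S}
  {CB : DiscreteCoordination S'} {v w x z z' : Euc d} {i j f : Fin d} {ε ε' : ℝ}

lemma MapsGrid.subset_source (he : e.MapsGrid CA CB) {s : Set (Euc d)} (hs : s ⊆ S) :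
    s ⊆ e.source :=
  he.source_eq ▸ hs

lemma MapsGrid.isOpen_source (he : e.MapsGrid CA CB) : IsOpen S := he.source_eq ▸ e.open_source

lemma MapsGrid.map_mem (he : e.MapsGrid CA CB) (hz : z ∈ S) : e z ∈ S' :=
  he.target_eq ▸ e.map_source (he.source_eq ▸ hz)

lemma MapsGrid.left_inv (he : e.MapsGrid CA CB) (hz : z ∈ S) : e.symm (e z) = z :=
  e.left_inv (he.source_eq ▸ hz)

lemma MapsGrid.continuousAt (he : e.MapsGrid CA CB) (hz : z ∈ S) : ContinuousAt e z :=
  e.continuousAt (he.source_eq ▸ hz)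

lemma MapsGrid.symm (he : e.MapsGrid CA CB) : e.symm.MapsGrid CB CA := by
  refine ⟨he.target_eq, he.source_eq, ?_⟩
  rw [← he.image_grid]
  exact e.toPartialEquiv.symm_image_image_of_subset_source (he.subset_source CA.grid_subset)

lemma MapsGrid.isOpen_target (he : e.MapsGrid CA CB) : IsOpen S' := he.symm.isOpen_source

lemma MapsGrid.image_eq_image_iff (he : e.MapsGrid CA CB) {s t : Set (Euc d)} (hs : s ⊆ S)
    (ht : t ⊆ S) : e '' s = e '' t ↔ s = t :=
  e.injOn.image_eq_image_iff (he.subset_source hs) (he.subset_source ht)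

lemma MapsGrid.image_mem_grid_iff (he : e.MapsGrid CA CB) (hz : z ∈ S) :
    e z ∈ CB.grid ↔ z ∈ CA.grid := by
  rw [← he.image_grid, e.injOn.mem_image_iff (he.subset_source CA.grid_subset)
    (he.source_eq ▸ hz)]

variable (e CA CB) in
structure IsGridChart (x : Euc d) (ε ε' : ℝ) : Prop where
  source : CA.IsGridBall x ε
  target : CB.IsGridBall (e x) ε'
  mapsTo : MapsTo e (ball x ε) (ball (e x) ε')

lemma MapsGrid.exists_isGridChart (he : e.MapsGrid CA CB) (hx : x ∈ S) :
    ∃ ε ε', e.IsGridChart CA CB x ε ε' := by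
  obtain ⟨ε', hB⟩ := CB.exists_isGridBall he.isOpen_target (he.map_mem hx)
  obtain ⟨ε₀, hA⟩ := CA.exists_isGridBall he.isOpen_source hx
  obtain ⟨δ, hδ, hδmaps⟩ := Metric.continuousAt_iff.1 (he.continuousAt hx) ε' hB.1
  refine ⟨min ε₀ δ, ε', hA.mono (lt_min hA.1 hδ) (min_le_left _ _), hB, fun z hz => ?_⟩
  exact hδmaps (lt_of_lt_of_le (mem_ball.1 hz) (min_le_right _ _))

lemma IsGridChart.ball_subset (hc : e.IsGridChart CA CB x ε ε') : ball x ε ⊆ S :=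
  hc.source.2.1

lemma IsGridChart.mem (hc : e.IsGridChart CA CB x ε ε') : x ∈ S :=
  hc.ball_subset (mem_ball_self hc.source.1)

/-- A segment joining two points of one orthant stays in it, and its image is connected and off
the grid. -/
lemma IsGridChart.upperAxes_image_eq (hc : e.IsGridChart CA CB x ε ε') (he : e.MapsGrid CA CB)
    (hz : z ∈ ball x ε) (hz' : z' ∈ ball x ε) (hzg : z ∉ CA.grid) (hzg' : z' ∉ CA.grid)
    (h : upperAxes x (CA.axesAt x) z = upperAxes x (CA.axesAt x) z') :
    upperAxes (e x) (CB.axesAt (e x)) (e z) = upperAxes (e x) (CB.axesAt (e x)) (e z') := by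
  have hseg : segment ℝ z z' ⊆ ball x ε := (convex_ball x ε).segment_subset hz hz'
  have hoff : ∀ p ∈ segment ℝ z z', p ∉ CA.grid := by
    intro p hp
    rw [hc.source.notMem_grid_iff (hseg hp)]
    intro i hi
    have hzi := (hc.source.notMem_grid_iff hz).1 hzg i hi
    have hzi' := (hc.source.notMem_grid_iff hz').1 hzg' i hi
    have hside : x i < z i ↔ x i < z' i := by
      simpa [upperAxes, hi] using congrArg (i ∈ ·) h
    have hconv : ∀ s : Set ℝ, Convex ℝ s → Convex ℝ {q : Euc d | q i ∈ s} := fun s hs =>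
      hs.linear_preimage (EuclideanSpace.proj i : Euc d →L[ℝ] ℝ).toLinearMap
    rcases hzi.lt_or_gt with hlt | hlt
    · have hlt' : z' i < x i := lt_of_le_of_ne (not_lt.1 (mt hside.2 hlt.not_gt)) hzi'
      exact ((hconv _ (convex_Iio (x i))).segment_subset hlt hlt' hp).ne
    · exact ((hconv _ (convex_Ioi (x i))).segment_subset hlt (hside.1 hlt) hp).ne'
  refine ((convex_segment z z').isPreconnected.image e
    (e.continuousOn.mono (he.subset_source (hseg.trans hc.ball_subset)))).upperAxes_eq ?_
    (mem_image_of_mem e (left_mem_segment ℝ z z')) (mem_image_of_mem e (right_mem_segment ℝ z z'))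
  rintro _ ⟨p, hp, rfl⟩
  refine (hc.target.notMem_grid_iff (hc.mapsTo (hseg hp))).1 ?_
  rw [he.image_mem_grid_iff (hc.ball_subset (hseg hp))]
  exact hoff p hp

lemma IsGridChart.symm_of_mapsTo (hc : e.IsGridChart CA CB x ε ε') (he : e.MapsGrid CA CB)
    {ρ : ℝ} (hρ : 0 < ρ) (hρε' : ρ ≤ ε') (hmaps : MapsTo e.symm (ball (e x) ρ) (ball x ε)) :
    e.symm.IsGridChart CB CA (e x) ρ ε := by
  have hx : e.symm (e x) = x := he.left_inv hc.mem
  refine ⟨hc.target.mono hρ hρε', ?_, ?_⟩ <;> rw [hx]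
  exacts [hc.source, hmaps]

/-- Every orthant at `x` has points arbitrarily close to `x`, where `e.symm` is controlled, so
this follows from `upperAxes_image_eq` for `e.symm`. -/
lemma IsGridChart.upperAxes_eq_of_image (hc : e.IsGridChart CA CB x ε ε')
    (he : e.MapsGrid CA CB) (hz : z ∈ ball x ε) (hz' : z' ∈ ball x ε)
    (hzg : z ∉ CA.grid) (hzg' : z' ∉ CA.grid)
    (h : upperAxes (e x) (CB.axesAt (e x)) (e z) = upperAxes (e x) (CB.axesAt (e x)) (e z')) :
    upperAxes x (CA.axesAt x) z = upperAxes x (CA.axesAt x) z' := by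
  have hx := hc.mem
  obtain ⟨ρ, hρ, hρmaps⟩ :=
    Metric.continuousAt_iff.1 (he.symm.continuousAt (he.map_mem hx)) ε hc.source.1
  rw [he.left_inv hx] at hρmaps
  have hc' := hc.symm_of_mapsTo he (lt_min hρ hc.target.1) (min_le_right _ _)
    fun y hy => hρmaps (lt_of_lt_of_le (mem_ball.1 hy) (min_le_left _ _))
  obtain ⟨δ, hδ, hδmaps⟩ := Metric.continuousAt_iff.1 (he.continuousAt hx) _ hc'.source.1
  have hrep : ∀ y ∈ ball x ε, y ∉ CA.grid → ∃ w ∈ ball x ε, w ∉ CA.grid ∧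
      e w ∈ ball (e x) (min ρ ε') ∧
      upperAxes x (CA.axesAt x) w = upperAxes x (CA.axesAt x) y ∧
      upperAxes (e x) (CB.axesAt (e x)) (e w) = upperAxes (e x) (CB.axesAt (e x)) (e y) := by
    intro y hy hyg
    obtain ⟨w, hw, hwg, hwy⟩ := hc.source.exists_notMem_grid_upperAxes_eq
      (σ := upperAxes x (CA.axesAt x) y) (Finset.filter_subset _ _) (lt_min hδ hc.source.1)
      (min_le_right _ _)
    have hwε := ball_subset_ball (min_le_right _ _) hw
    exact ⟨w, hwε, hwg, hδmaps (lt_of_lt_of_le (mem_ball.1 hw) (min_le_left _ _)), hwy,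
      hc.upperAxes_image_eq he hwε hy hwg hyg hwy⟩
  obtain ⟨w, hw, hwg, hew, hwz, hewz⟩ := hrep z hz hzg
  obtain ⟨w', hw', hwg', hew', hwz', hewz'⟩ := hrep z' hz' hzg'
  have key := hc'.upperAxes_image_eq he.symm hew hew'
    (by rwa [he.image_mem_grid_iff (hc.ball_subset hw)])
    (by rwa [he.image_mem_grid_iff (hc.ball_subset hw')])
    (by rw [hewz, hewz', h])
  rw [he.left_inv hx, he.left_inv (hc.ball_subset hw), he.left_inv (hc.ball_subset hw')] at key
  rw [← hwz, ← hwz', key]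

lemma IsGridChart.exists_injOn_upperAxes_image (hc : e.IsGridChart CA CB x ε ε')
    (he : e.MapsGrid CA CB) : ∃ z : Finset (Fin d) → Euc d, (∀ σ ∈ (CA.axesAt x).powerset,
      z σ ∈ ball x ε ∧ z σ ∉ CA.grid ∧ upperAxes x (CA.axesAt x) (z σ) = σ) ∧
      InjOn (fun σ => upperAxes (e x) (CB.axesAt (e x)) (e (z σ))) (CA.axesAt x).powerset := by
  have hrep : ∀ σ ∈ (CA.axesAt x).powerset, ∃ w ∈ ball x ε, w ∉ CA.grid ∧
      upperAxes x (CA.axesAt x) w = σ := fun σ hσ =>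
    hc.source.exists_notMem_grid_upperAxes_eq (Finset.mem_powerset.1 hσ) hc.source.1 le_rfl
  choose! z hz hzg hzσ using hrep
  refine ⟨z, fun σ hσ => ⟨hz σ hσ, hzg σ hσ, hzσ σ hσ⟩, fun σ hσ τ hτ h => ?_⟩
  rw [← hzσ σ hσ, ← hzσ τ hτ]
  exact hc.upperAxes_eq_of_image he (hz σ hσ) (hz τ hτ) (hzg σ hσ) (hzg τ hτ) h

lemma MapsGrid.card_axesAt_le (he : e.MapsGrid CA CB) (hx : x ∈ S) :
    (CA.axesAt x).card ≤ (CB.axesAt (e x)).card := by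
  obtain ⟨ε, ε', hc⟩ := he.exists_isGridChart hx
  obtain ⟨z, -, hinj⟩ := hc.exists_injOn_upperAxes_image he
  have hcard := Finset.card_le_card_of_injOn _
    (fun σ _ => Finset.mem_coe.2 (Finset.mem_powerset.2 (Finset.filter_subset _ _))) hinj
  rw [Finset.card_powerset, Finset.card_powerset] at hcard
  exact (Nat.pow_le_pow_iff_right (by norm_num)).1 hcard

lemma MapsGrid.exists_axesAt_image_eq_singleton (he : e.MapsGrid CA CB) (hw : w ∈ S)
    (hwi : CA.axesAt w = {i}) : ∃ f, CB.axesAt (e w) = {f} := by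
  have hle := he.symm.card_axesAt_le (he.map_mem hw)
  rw [he.left_inv hw, hwi, Finset.card_singleton] at hle
  have hge := he.card_axesAt_le hw
  rw [hwi, Finset.card_singleton] at hge
  exact Finset.card_eq_one.1 (le_antisymm hle hge)

/-- Along a short segment crossing the separator at `w`, the image meets the grid only at `e w`,
so the side of the image can only change with respect to the axis `f`; and it does change, since
the orthant map is injective. -/
lemma IsGridChart.symmDiff_upperAxes_image (hc : e.IsGridChart CA CB v ε ε')
    (he : e.MapsGrid CA CB) (hw : w ∈ ball v ε) (hwi : CA.axesAt w = {i})
    (hwf : CB.axesAt (e w) = {f}) (hz : z ∈ ball v ε) (hz' : z' ∈ ball v ε)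
    (hzg : z ∉ CA.grid) (hzg' : z' ∉ CA.grid)
    (hzw : upperAxes v (CA.axesAt v) z = insert i (upperAxes v (CA.axesAt v) w))
    (hz'w : upperAxes v (CA.axesAt v) z' = upperAxes v (CA.axesAt v) w) :
    upperAxes (e v) (CB.axesAt (e v)) (e z) ∆ upperAxes (e v) (CB.axesAt (e v)) (e z') =
      {f} := by
  obtain ⟨L, hLball, hL, hLgrid, z₁, hz₁, z₀, hz₀, hg₁, hg₀, h₁, h₀⟩ :=
    hc.source.exists_crossing hw hwi
  rw [← hc.upperAxes_image_eq he (hLball hz₁) hz hg₁ hzg (h₁.trans hzw.symm),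
    ← hc.upperAxes_image_eq he (hLball hz₀) hz' hg₀ hzg' (h₀.trans hz'w.symm)]
  refine Finset.symmDiff_eq_singleton_of_erase_eq ?_ fun h => ?_
  · simp only [upperAxes, ← Finset.filter_erase]
    refine (hL.image e (e.continuousOn.mono (he.subset_source (hLball.trans hc.ball_subset))))
      |>.upperAxes_eq ?_ (mem_image_of_mem e hz₁) (mem_image_of_mem e hz₀)
    rintro _ ⟨p, hp, rfl⟩ g hg hpg
    obtain ⟨hgf, hgJ⟩ := Finset.mem_erase.1 hg
    by_cases hpgrid : p ∈ CA.grid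
    · obtain rfl := hLgrid p hp hpgrid
      have hg' : g ∈ CB.axesAt (e p) := (hc.target.mem_axesAt_iff (hc.mapsTo hw)).2 ⟨hgJ, hpg⟩
      exact hgf (Finset.mem_singleton.1 (hwf ▸ hg'))
    · refine (hc.target.notMem_grid_iff (hc.mapsTo (hLball hp))).1 ?_ g hgJ hpg
      rwa [he.image_mem_grid_iff (hc.ball_subset (hLball hp))]
  · have hσ := hc.upperAxes_eq_of_image he (hLball hz₁) (hLball hz₀) hg₁ hg₀ h
    rw [h₁, h₀] at hσ
    have hwiv := ((hc.source.mem_axesAt_iff hw).1 (hwi ▸ Finset.mem_singleton_self i)).2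
    have hiσ : i ∈ upperAxes v (CA.axesAt v) w := hσ ▸ Finset.mem_insert_self i _
    simp [upperAxes, hwiv] at hiσ

variable (e CA CB) in
def IsAxisImageNear (i : Fin d) (v : Euc d) (f : Fin d) : Prop :=
  ∃ ε > 0, ∀ w ∈ ball v ε, CA.axesAt w = {i} → CB.axesAt (e w) = {f} ∧ e w f = e v f

lemma MapsGrid.exists_isAxisImageNear (he : e.MapsGrid CA CB) (hv : v ∈ S)
    (hi : i ∈ CA.axesAt v) : ∃ f, e.IsAxisImageNear CA CB i v f := by
  obtain ⟨ε, ε', hc⟩ := he.exists_isGridChart hv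
  obtain ⟨z, hz, hP⟩ := hc.exists_injOn_upperAxes_image he
  set P := fun σ => upperAxes (e v) (CB.axesAt (e v)) (e (z σ))
  have hwall : ∀ w ∈ ball v ε, ∀ k f, CA.axesAt w = {k} → CB.axesAt (e w) = {f} →
      P (insert k (upperAxes v (CA.axesAt v) w)) ∆ P (upperAxes v (CA.axesAt v) w) = {f} := by
    intro w hw k f hwk hwf
    have hkI := ((hc.source.mem_axesAt_iff hw).1 (hwk ▸ Finset.mem_singleton_self k)).1
    have hσ : upperAxes v (CA.axesAt v) w ∈ (CA.axesAt v).powerset :=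
      Finset.mem_powerset.2 (Finset.filter_subset _ _)
    have hkσ : insert k (upperAxes v (CA.axesAt v) w) ∈ (CA.axesAt v).powerset :=
      Finset.mem_powerset.2 (Finset.insert_subset hkI (Finset.filter_subset _ _))
    exact hc.symmDiff_upperAxes_image he hw hwk hwf (hz _ hkσ).1 (hz _ hσ).1 (hz _ hkσ).2.1
      (hz _ hσ).2.1 (hz _ hkσ).2.2 (hz _ hσ).2.2
  have hedge : ∀ k ∈ CA.axesAt v, ∀ σ ⊆ CA.axesAt v, k ∉ σ →
      ∃ f, P (insert k σ) ∆ P σ = {f} := by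
    intro k hk σ hσ hkσ
    obtain ⟨w, hw, hwk, hwσ⟩ :=
      hc.source.exists_axesAt_eq_singleton hk hσ hkσ hc.source.1 le_rfl
    obtain ⟨f, hwf⟩ := he.exists_axesAt_image_eq_singleton (hc.ball_subset hw) hwk
    exact ⟨f, hwσ ▸ hwall w hw k f hwk hwf⟩
  obtain ⟨f, hf⟩ := Finset.exists_symmDiff_insert_eq_singleton hP hedge hi
  refine ⟨f, ε, hc.source.1, fun w hw hwi => ?_⟩
  obtain ⟨f', hwf'⟩ := he.exists_axesAt_image_eq_singleton (hc.ball_subset hw) hwi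
  have hwiv := ((hc.source.mem_axesAt_iff hw).1 (hwi ▸ Finset.mem_singleton_self i)).2
  obtain rfl : f' = f := Finset.singleton_inj.1 <| (hwall w hw i f' hwi hwf').symm.trans <|
    hf _ (Finset.filter_subset _ _) (by simp [upperAxes, hwiv])
  exact ⟨hwf', ((hc.target.mem_axesAt_iff (hc.mapsTo hw)).1
    (hwf' ▸ Finset.mem_singleton_self f')).2⟩

lemma IsAxisImageNear.mem_axesAt (h : e.IsAxisImageNear CA CB i v f) (he : e.MapsGrid CA CB)
    (hv : v ∈ S) (hi : i ∈ CA.axesAt v) : f ∈ CB.axesAt (e v) := by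
  obtain ⟨ε, hε, hε'⟩ := h
  obtain ⟨w, hw, hwi⟩ := exists_axesAt_eq_singleton he.isOpen_source hv hi hε
  obtain ⟨hwf, hwv⟩ := hε' w hw hwi
  obtain ⟨k, hk⟩ := DiscreteCoordination.mem_axesAt.1 (hwf ▸ Finset.mem_singleton_self f)
  exact DiscreteCoordination.mem_axesAt.2 ⟨k, hwv ▸ hk⟩

lemma IsAxisImageNear.eventually_eq (h : e.IsAxisImageNear CA CB i v f)
    (he : e.MapsGrid CA CB) : ∀ᶠ v' in 𝓝 v, v' ∈ S → i ∈ CA.axesAt v' →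
      ∀ f', e.IsAxisImageNear CA CB i v' f' → f' = f ∧ e v' f = e v f := by
  obtain ⟨ε, hε, hε'⟩ := h
  filter_upwards [ball_mem_nhds v hε] with v' hv' hv'S hi f' ⟨ε₁, hε₁, hε₁'⟩
  obtain ⟨w, hw, hwi⟩ := exists_axesAt_eq_singleton he.isOpen_source hv'S hi
    (lt_min hε₁ (sub_pos.2 hv'))
  have hwv : w ∈ ball v ε := by
    have := (mem_ball.1 hw).trans_le (min_le_right _ _)
    exact mem_ball.2 (by linarith [dist_triangle w v' v])
  obtain ⟨hwf, hwfv⟩ := hε' w hwv hwi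
  obtain ⟨hwf', hwfv'⟩ := hε₁' w (ball_subset_ball (min_le_left _ _) hw) hwi
  obtain rfl : f' = f := Finset.singleton_inj.1 (hwf'.symm.trans hwf)
  exact ⟨rfl, hwfv'.symm.trans hwfv⟩

lemma MapsGrid.exists_image_Gamma_subset (he : e.MapsGrid CA CB) (i : Fin d)
    (k : Fin (CA.n i)) : ∃ f, ∃ l, e '' Gamma S i (CA.A i k) ⊆ Gamma S' f (CB.A f l) := by
  set H := Gamma S i (CA.A i k)
  have hiH : ∀ v ∈ H, i ∈ CA.axesAt v := fun v hv => mem_axesAt.2 ⟨k, hv.2⟩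
  have : Nonempty (Fin d) := ⟨i⟩
  choose! f hf using fun v (hv : v ∈ H) => he.exists_isAxisImageNear hv.1 (hiH v hv)
  obtain ⟨v₀, hv₀⟩ := (CA.sep i k).1.nonempty
  have hconst : ∀ v ∈ H, f v₀ = f v ∧ e v₀ (f v₀) = e v (f v) := fun v hv =>
    (CA.sep i k).1.isPreconnected.induction₂ (fun a b => f a = f b ∧ e a (f a) = e b (f b))
      (fun a ha => by
        filter_upwards [nhdsWithin_le_nhds ((hf a ha).eventually_eq he), self_mem_nhdsWithin]
          with b hb hbH
        obtain ⟨hfb, hb⟩ := hb hbH.1 (hiH b hbH) (f b) (hf b hbH)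
        exact ⟨hfb.symm, hfb ▸ hb.symm⟩)
      (fun _ _ _ _ _ _ hab hbc => ⟨hab.1.trans hbc.1, hab.2.trans hbc.2⟩)
      (fun _ _ _ _ hab => ⟨hab.1.symm, hab.2.symm⟩) hv₀ hv
  obtain ⟨l, hl⟩ := mem_axesAt.1 ((hf v₀ hv₀).mem_axesAt he hv₀.1 (hiH v₀ hv₀))
  refine ⟨f v₀, l, ?_⟩
  rintro _ ⟨v, hv, rfl⟩
  obtain ⟨hfv, hev⟩ := hconst v hv
  exact ⟨he.map_mem hv.1, (congrArg (e v ·) hfv).trans (hev.symm.trans hl)⟩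

lemma MapsGrid.image_Gamma_mem_axisSet (he : e.MapsGrid CA CB) (i : Fin d) (k : Fin (CA.n i)) :
    ∃ f, e '' Gamma S i (CA.A i k) ∈ CB.axisSet f := by
  obtain ⟨f, l, hsub⟩ := he.exists_image_Gamma_subset i k
  obtain ⟨j, m, hsub'⟩ := he.symm.exists_image_Gamma_subset f l
  have hH : Gamma S i (CA.A i k) ⊆ e.symm '' Gamma S' f (CB.A f l) := fun z hz =>
    ⟨e z, hsub (mem_image_of_mem e hz), he.left_inv hz.1⟩
  obtain ⟨rfl, hm⟩ :=
    eq_of_Gamma_subset_Gamma he.isOpen_source (CA.sep i k).1.nonempty (hH.trans hsub')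
  refine ⟨f, l, subset_antisymm hsub fun y hy => ⟨e.symm y, hm ▸ hsub' (mem_image_of_mem _ hy), ?_⟩⟩
  exact he.symm.left_inv hy.1

lemma MapsGrid.eq_of_image_mem_axisSet (he : e.MapsGrid CA CB) {k : Fin (CA.n i)}
    {l : Fin (CA.n j)} (hmeet : (Gamma S i (CA.A i k) ∩ Gamma S j (CA.A j l)).Nonempty)
    (hk : e '' Gamma S i (CA.A i k) ∈ CB.axisSet f)
    (hl : e '' Gamma S j (CA.A j l) ∈ CB.axisSet f) : i = j := by
  obtain ⟨p, hpk, hpl⟩ := hmeet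
  obtain ⟨m, hm⟩ := hk
  obtain ⟨m', hm'⟩ := hl
  have hpm : e p ∈ Gamma S' f (CB.A f m) := hm ▸ mem_image_of_mem e hpk
  have hpm' : e p ∈ Gamma S' f (CB.A f m') := hm' ▸ mem_image_of_mem e hpl
  have heq : Gamma S i (CA.A i k) = Gamma S j (CA.A j l) :=
    (he.image_eq_image_iff (Gamma_subset _ _ _) (Gamma_subset _ _ _)).1
      (by rw [hm, hm', ← hpm.2, ← hpm'.2])
  exact (eq_of_Gamma_subset_Gamma he.isOpen_source ⟨p, hpk⟩ heq.le).1

lemma MapsGrid.exists_perm (he : e.MapsGrid CA CB) (hbb : CA.HasBackbone) :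
    ∃ σ : Equiv.Perm (Fin d), ∀ i k, e '' Gamma S i (CA.A i k) ∈ CB.axisSet (σ i) := by
  choose E hE using he.image_Gamma_mem_axisSet
  obtain ⟨kstar, ⟨z, hz⟩, hmeet⟩ := hbb
  have hz' : ∀ i, z ∈ Gamma S i (CA.A i (kstar i)) := fun i =>
    mem_iInter.1 (hz ▸ mem_singleton z) i
  have hinj : Function.Injective fun i => E i (kstar i) := fun i j (hij : E i _ = E j _) =>
    he.eq_of_image_mem_axisSet ⟨z, hz' i, hz' j⟩ (hE i _) (hij ▸ hE j _)
  have hE' : ∀ i k, E i k = E i (kstar i) := by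
    intro i k
    obtain ⟨m, hm : E m (kstar m) = E i k⟩ := Finite.injective_iff_surjective.1 hinj (E i k)
    obtain rfl : m = i := by
      by_contra hmi
      exact hmi (he.eq_of_image_mem_axisSet (hmeet m i (Ne.symm hmi) k) (hE m _) (hm ▸ hE i k))
    exact hm.symm
  refine ⟨Equiv.ofBijective _ (Finite.injective_iff_bijective.1 hinj), fun i k => ?_⟩
  exact (show _ ∈ CB.axisSet (E i (kstar i)) from hE' i k ▸ hE i k)

variable {σ : Equiv.Perm (Fin d)}

lemma MapsGrid.image_mem_axisSet_iff (he : e.MapsGrid CA CB)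
    (hσ : ∀ i k, e '' Gamma S i (CA.A i k) ∈ CB.axisSet (σ i)) {H : Set (Euc d)}
    (hH : H ∈ CA.sepSet) (i : Fin d) : H ∈ CA.axisSet i ↔ e '' H ∈ CB.axisSet (σ i) := by
  obtain ⟨j, k, rfl⟩ := hH
  refine ⟨fun hi => ?_, fun hi => ?_⟩
  · obtain rfl := eq_of_mem_axisSet he.isOpen_source ⟨k, rfl⟩ hi
    exact hσ j k
  · obtain rfl := σ.injective (eq_of_mem_axisSet he.isOpen_target (hσ j k) hi)
    exact ⟨k, rfl⟩

lemma MapsGrid.bijOn_axisSet (he : e.MapsGrid CA CB)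
    (hσ : ∀ i k, e '' Gamma S i (CA.A i k) ∈ CB.axisSet (σ i)) (i : Fin d) :
    BijOn (fun H => e '' H) (CA.axisSet i) (CB.axisSet (σ i)) := by
  refine ⟨?_, ?_, ?_⟩
  · rintro _ ⟨k, rfl⟩
    exact hσ i k
  · rintro _ ⟨k, rfl⟩ _ ⟨l, rfl⟩ h
    exact (he.image_eq_image_iff (Gamma_subset _ _ _) (Gamma_subset _ _ _)).1 h
  · rintro _ ⟨l, rfl⟩
    obtain ⟨j, m, hm⟩ := he.symm.image_Gamma_mem_axisSet (σ i) l
    have hG : e '' Gamma S j (CA.A j m) = Gamma S' (σ i) (CB.A (σ i) l) := by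
      rw [← hm]
      exact e.toPartialEquiv.image_symm_image_of_subset_target
        (he.symm.subset_source (Gamma_subset _ _ _))
    obtain rfl := σ.injective (eq_of_mem_axisSet he.isOpen_target (hG ▸ hσ j m) ⟨l, rfl⟩)
    exact ⟨_, ⟨m, rfl⟩, hG⟩

end OpenPartialHomeomorph

theorem recovery_of_parallel_separator_sets_general
    {d : ℕ} {S S' : Set (Euc d)} (hS : IsOpen S)
    (hS' : IsOpen S')
    {h hinv : Euc d → Euc d} (hdiff : IsSmoothDiffeoOn h hinv S S')
    (CA : DiscreteCoordination S) (hbb : CA.HasBackbone)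
    (CB : DiscreteCoordination S')
    (hgrid : h '' CA.grid = CB.grid) :
    ∃ σ : Equiv.Perm (Fin d), ∀ i : Fin d,
      (∀ H ∈ CA.sepSet, (H ∈ CA.axisSet i ↔ h '' H ∈ CB.axisSet (σ i))) ∧
      Set.BijOn (fun H => h '' H) (CA.axisSet i) (CB.axisSet (σ i)) := by
  have he : (hdiff.toOpenPartialHomeomorph hS hS').MapsGrid CA CB := ⟨rfl, rfl, hgrid⟩
  obtain ⟨σ, hσ⟩ := he.exists_perm hbb
  exact ⟨σ, fun i => ⟨fun H hH => he.image_mem_axisSet_iff hσ hH i, he.bijOn_axisSet hσ i⟩⟩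

/-- **Recovery of the partition into parallel-separator-sets.** -/
theorem recovery_of_parallel_separator_sets
    {d : ℕ} {S S' : Set (Euc d)} (hS : IsOpen S) (hSc : IsConnected S)
    (hS' : IsOpen S') (hS'c : IsConnected S')
    {h hinv : Euc d → Euc d} (hdiff : IsSmoothDiffeoOn h hinv S S')
    (CA : DiscreteCoordination S) (hbb : CA.HasBackbone)
    (CB : DiscreteCoordination S')
    (hgrid : h '' CA.grid = CB.grid) :
    ∃ σ : Equiv.Perm (Fin d), ∀ i : Fin d,
      (∀ H ∈ CA.sepSet, (H ∈ CA.axisSet i ↔ h '' H ∈ CB.axisSet (σ i))) ∧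
      Set.BijOn (fun H => h '' H) (CA.axisSet i) (CB.axisSet (σ i)) :=
  recovery_of_parallel_separator_sets_general hS hS' hdiff CA hbb CB hgrid
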